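/- Under the same hypotheses (A symmetric PSD with eigenvalues λ₁ > λ₂ ≥ ⋯ ≥ λₙ ≥ 0 and orthonormal eigenvectors u_i; x_{k+1} = ζ_k A x_k + ω_k A² x_k with ζ_k + ω_k λ₁ ≠ 0; ‖x₀‖ = 1, u₁ᵀx₀ ≠ 0; and |ζ_k + ω_k λ_j| ≤ δ |ζ_k + ω_k λ₁| for all j ≥ 2, k ≥ 0, for some δ ∈ [0,1]), the Rayleigh quotients r(x_k) = x_kᵀA x_k / ‖x_k‖² satisfy |r(x_k) − λ₁| ≤ (λ₁ − λₙ) · tan²θ₀ · (λ₂/λ₁)^{2k} · δ^{2k} for all k ≥ 0, where cos θ₀ = |u₁ᵀx₀|. -/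

import Mathlib

open Matrix RealInnerProductSpace

/-- View a plain vector as an element of Euclidean space. -/
def toEuc {m : ℕ} (w : Fin m → ℝ) : EuclideanSpace ℝ (Fin m) := WithLp.toLp 2 w

/-!
Expand `x_k` in the eigenbasis: the iteration multiplies the `i`-th coefficient by
`λ_i (ζ_k + ω_k λ_i)`, so the ratio of the `i`-th to the first coefficient shrinks at least by
`ρ = λ₂ δ / λ₁` per step. The defect `λ₁ − r(x)` is a weighted mean of the gaps `λ₁ − λ_i` with
weights the squared coefficients, hence at most `(λ₁ − λₙ)` times the sum of the squared ratios,
which is `tan² θ₀` at `k = 0` and decays like `ρ^{2k}`.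
-/

open Finset

lemma abs_sum_mul_div_sum_sub_le {ι : Type*} [Fintype ι] [DecidableEq ι] {i₀ : ι}
    {w lam : ι → ℝ} {m : ℝ} (hw : ∀ i, 0 ≤ w i) (hw₀ : 0 < w i₀)
    (hmax : ∀ i, lam i ≤ lam i₀) (hmin : ∀ i, m ≤ lam i) :
    |(∑ i, lam i * w i) / (∑ i, w i) - lam i₀|
      ≤ (lam i₀ - m) * ∑ i ∈ univ.erase i₀, w i / w i₀ := by
  have hle : w i₀ ≤ ∑ i, w i := single_le_sum (fun i _ => hw i) (mem_univ i₀)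
  have hpos : 0 < ∑ i, w i := hw₀.trans_le hle
  have hdefect : lam i₀ * ∑ i, w i - ∑ i, lam i * w i
      = ∑ i ∈ univ.erase i₀, (lam i₀ - lam i) * w i := by
    rw [mul_sum, ← sum_sub_distrib, ← sum_erase_add _ _ (mem_univ i₀)]
    simp only [sub_self, add_zero, sub_mul]
  have hdefect_nonneg : 0 ≤ ∑ i ∈ univ.erase i₀, (lam i₀ - lam i) * w i :=
    sum_nonneg fun i _ => mul_nonneg (sub_nonneg.2 (hmax i)) (hw i)
  have hdefect_le : ∑ i ∈ univ.erase i₀, (lam i₀ - lam i) * w i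
      ≤ (lam i₀ - m) * ∑ i ∈ univ.erase i₀, w i := by
    rw [mul_sum]
    exact sum_le_sum fun i _ => mul_le_mul_of_nonneg_right (by linarith [hmin i]) (hw i)
  have hrest_nonneg : 0 ≤ (lam i₀ - m) * ∑ i ∈ univ.erase i₀, w i :=
    hdefect_nonneg.trans hdefect_le
  have hmean : lam i₀ - (∑ i, lam i * w i) / ∑ i, w i
      = (∑ i ∈ univ.erase i₀, (lam i₀ - lam i) * w i) / ∑ i, w i := by
    rw [← hdefect]
    field_simp
  calc |(∑ i, lam i * w i) / (∑ i, w i) - lam i₀|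
      = (∑ i ∈ univ.erase i₀, (lam i₀ - lam i) * w i) / ∑ i, w i := by
        rw [abs_sub_comm, hmean, abs_of_nonneg (div_nonneg hdefect_nonneg hpos.le)]
    _ ≤ (lam i₀ - m) * (∑ i ∈ univ.erase i₀, w i) / w i₀ :=
        div_le_div₀ hrest_nonneg hdefect_le hw₀ hle
    _ = (lam i₀ - m) * ∑ i ∈ univ.erase i₀, w i / w i₀ := by rw [mul_div_assoc, sum_div]

lemma abs_div_le_pow_mul_abs_div {a b p q : ℕ → ℝ} {ρ : ℝ}
    (ha : ∀ k, a (k + 1) = p k * a k) (hb : ∀ k, b (k + 1) = q k * b k)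
    (hpq : ∀ k, |p k / q k| ≤ ρ) (k : ℕ) :
    |a k / b k| ≤ ρ ^ k * |a 0 / b 0| := by
  induction k with
  | zero => simp
  | succ k ih =>
    rw [ha, hb, mul_div_mul_comm, abs_mul, pow_succ', mul_assoc]
    exact mul_le_mul (hpq k) ih (abs_nonneg _) ((abs_nonneg _).trans (hpq k))

section Eigenbasis

variable {ι E : Type*} [Fintype ι] [NormedAddCommGroup E] [InnerProductSpace ℝ E]
  {T : E →ₗ[ℝ] E} {b : OrthonormalBasis ι ℝ E} {lam : ι → ℝ}

lemma LinearMap.IsSymmetric.inner_apply_eq_of_apply_eq_smul (hT : T.IsSymmetric) {v : E}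
    {μ : ℝ} (hv : T v = μ • v) (y : E) : ⟪v, T y⟫ = μ * ⟪v, y⟫ := by
  rw [← hT, hv, real_inner_smul_left]

lemma LinearMap.IsSymmetric.inner_apply_self_eq_sum (hT : T.IsSymmetric)
    (hb : ∀ i, T (b i) = lam i • b i) (y : E) :
    ⟪y, T y⟫ = ∑ i, lam i * ⟪b i, y⟫ ^ 2 := by
  rw [← b.sum_inner_mul_inner]
  refine sum_congr rfl fun i _ => ?_
  rw [hT.inner_apply_eq_of_apply_eq_smul (hb i), real_inner_comm]
  ring

lemma LinearMap.IsSymmetric.abs_rayleigh_sub_le [DecidableEq ι] (hT : T.IsSymmetric)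
    (hb : ∀ i, T (b i) = lam i • b i) {i₀ : ι} {m : ℝ}
    (hmax : ∀ i, lam i ≤ lam i₀) (hmin : ∀ i, m ≤ lam i) {y : E} (hy : ⟪b i₀, y⟫ ≠ 0) :
    |⟪y, T y⟫ / ‖y‖ ^ 2 - lam i₀|
      ≤ (lam i₀ - m) * ∑ i ∈ univ.erase i₀, (⟪b i, y⟫ / ⟪b i₀, y⟫) ^ 2 := by
  rw [hT.inner_apply_self_eq_sum hb, ← b.sum_sq_inner_right]
  simp_rw [div_pow]
  exact abs_sum_mul_div_sum_sub_le (fun _ => sq_nonneg _) (by positivity) hmax hmin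

section Iteration

variable {x : ℕ → E} {ζ ω : ℕ → ℝ}

lemma LinearMap.IsSymmetric.inner_iterate_succ (hT : T.IsSymmetric)
    (hb : ∀ i, T (b i) = lam i • b i)
    (hrec : ∀ k, x (k + 1) = ζ k • T (x k) + ω k • T (T (x k))) (i : ι) (k : ℕ) :
    ⟪b i, x (k + 1)⟫ = lam i * (ζ k + ω k * lam i) * ⟪b i, x k⟫ := by
  simp only [hrec, inner_add_right, real_inner_smul_right,
    hT.inner_apply_eq_of_apply_eq_smul (hb i)]
  ring

theorem LinearMap.IsSymmetric.abs_rayleigh_iterate_sub_le [DecidableEq ι] (hT : T.IsSymmetric)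
    (hb : ∀ i, T (b i) = lam i • b i)
    (hrec : ∀ k, x (k + 1) = ζ k • T (x k) + ω k • T (T (x k)))
    {i₀ : ι} {m ρ : ℝ} (hmax : ∀ i, lam i ≤ lam i₀) (hmin : ∀ i, m ≤ lam i)
    (hx₀ : ‖x 0‖ = 1) (hc₀ : ⟪b i₀, x 0⟫ ≠ 0)
    (hq : ∀ k, lam i₀ * (ζ k + ω k * lam i₀) ≠ 0)
    (hρ : ∀ k, ∀ i ≠ i₀,
      |lam i * (ζ k + ω k * lam i)| ≤ ρ * |lam i₀ * (ζ k + ω k * lam i₀)|) (k : ℕ) :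
    |⟪x k, T (x k)⟫ / ‖x k‖ ^ 2 - lam i₀|
      ≤ (lam i₀ - m) * ((1 - ⟪b i₀, x 0⟫ ^ 2) / ⟪b i₀, x 0⟫ ^ 2) * ρ ^ (2 * k) := by
  have hcoef := hT.inner_iterate_succ hb hrec
  have hck : ⟪b i₀, x k⟫ ≠ 0 := by
    induction k with
    | zero => exact hc₀
    | succ k ih => rw [hcoef]; exact mul_ne_zero (hq k) ih
  have hratio (i : ι) (hi : i ≠ i₀) :
      (⟪b i, x k⟫ / ⟪b i₀, x k⟫) ^ 2 ≤ ρ ^ (2 * k) * (⟪b i, x 0⟫ / ⟪b i₀, x 0⟫) ^ 2 := by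
    have h := abs_div_le_pow_mul_abs_div (a := fun k => ⟪b i, x k⟫)
      (b := fun k => ⟪b i₀, x k⟫) (hcoef i) (hcoef i₀) (fun k => by
      rw [abs_div, div_le_iff₀ (abs_pos.2 (hq k))]; exact hρ k i hi) k
    rw [← sq_abs, ← sq_abs (_ / _), pow_mul', ← mul_pow]
    exact pow_le_pow_left₀ (abs_nonneg _) h 2
  have hrest : ∑ i ∈ univ.erase i₀, ⟪b i, x 0⟫ ^ 2 = 1 - ⟪b i₀, x 0⟫ ^ 2 := by
    rw [eq_sub_iff_add_eq, sum_erase_add _ _ (mem_univ i₀), b.sum_sq_inner_right, hx₀, one_pow]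
  calc |⟪x k, T (x k)⟫ / ‖x k‖ ^ 2 - lam i₀|
      ≤ (lam i₀ - m) * ∑ i ∈ univ.erase i₀, (⟪b i, x k⟫ / ⟪b i₀, x k⟫) ^ 2 :=
        hT.abs_rayleigh_sub_le hb hmax hmin hck
    _ ≤ (lam i₀ - m) * ∑ i ∈ univ.erase i₀, ρ ^ (2 * k) * (⟪b i, x 0⟫ / ⟪b i₀, x 0⟫) ^ 2 := by
        gcongr with i hi
        · linarith [hmin i₀]
        · exact hratio i (ne_of_mem_erase hi)
    _ = (lam i₀ - m) * ((1 - ⟪b i₀, x 0⟫ ^ 2) / ⟪b i₀, x 0⟫ ^ 2) * ρ ^ (2 * k) := by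
        simp_rw [← mul_sum, div_pow, ← sum_div, hrest]
        ring

end Iteration

end Eigenbasis

/-- Under the hypotheses of the Split-Merge convergence theorem, the Rayleigh quotients
`r(x_k) = x_kᵀA x_k/‖x_k‖²` satisfy
`|r(x_k) − λ₁| ≤ (λ₁ − λₙ) tan²θ₀ (λ₂/λ₁)^{2k} δ^{2k}` with `cos θ₀ = |u₁ᵀx₀|`. -/
theorem stmt_18 {n : ℕ} (hn : 2 ≤ n)
    (A : Matrix (Fin n) (Fin n) ℝ) (hsymm : A.IsSymm)
    (lam : Fin n → ℝ) (u : Fin n → EuclideanSpace ℝ (Fin n))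
    (horth : Orthonormal ℝ u)
    (heig : ∀ i, toEuc (A.mulVec (u i)) = lam i • u i)
    (hanti : ∀ i j : Fin n, i ≤ j → lam j ≤ lam i)
    (hnonneg : ∀ i, 0 ≤ lam i)
    (hgap : lam ⟨1, by omega⟩ < lam ⟨0, by omega⟩)
    (ζ ω : ℕ → ℝ)
    (hnz : ∀ k, ζ k + ω k * lam ⟨0, by omega⟩ ≠ 0)
    (x : ℕ → EuclideanSpace ℝ (Fin n))
    (hx0norm : ‖x 0‖ = 1)
    (hx0 : ⟪u ⟨0, by omega⟩, x 0⟫ ≠ 0)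
    (hrec : ∀ k, x (k + 1)
      = ζ k • toEuc (A.mulVec (x k)) + ω k • toEuc (A.mulVec (A.mulVec (x k))))
    (δ : ℝ)
    (hbound : ∀ k, ∀ j : Fin n, j ≠ ⟨0, by omega⟩ →
      |ζ k + ω k * lam j| ≤ δ * |ζ k + ω k * lam ⟨0, by omega⟩|) :
    ∀ k, |(x k ⬝ᵥ A.mulVec (x k)) / ‖x k‖ ^ 2 - lam ⟨0, by omega⟩|
      ≤ (lam ⟨0, by omega⟩ - lam ⟨n - 1, by omega⟩)
        * (Real.sqrt (1 - |⟪u ⟨0, by omega⟩, x 0⟫| ^ 2) / |⟪u ⟨0, by omega⟩, x 0⟫|) ^ 2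
        * (lam ⟨1, by omega⟩ / lam ⟨0, by omega⟩) ^ (2 * k) * δ ^ (2 * k) := by
  intro k
  have : NeZero n := ⟨by omega⟩
  set i₀ : Fin n := ⟨0, by omega⟩
  set i₁ : Fin n := ⟨1, by omega⟩
  have hlam₀ : 0 < lam i₀ := (hnonneg i₁).trans_lt hgap
  obtain ⟨b, rfl⟩ : ∃ b : OrthonormalBasis (Fin n) ℝ (EuclideanSpace ℝ (Fin n)), ⇑b = u :=
    ⟨_, OrthonormalBasis.coe_mk horth
      (horth.linearIndependent.span_eq_top_of_card_eq_finrank (by simp)).ge⟩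
  have hT : (toEuclideanLin A).IsSymmetric :=
    isSymmetric_toEuclideanLin_iff.2 (isHermitian_iff_isSymm.2 hsymm)
  have hρ (k : ℕ) (i : Fin n) (hi : i ≠ i₀) :
      |lam i * (ζ k + ω k * lam i)| ≤ lam i₁ * δ / lam i₀ * |lam i₀ * (ζ k + ω k * lam i₀)| := by
    have hi₁ : lam i ≤ lam i₁ :=
      hanti _ _ (Fin.le_def.2 (Nat.one_le_iff_ne_zero.2 fun h => hi (Fin.ext h)))
    rw [abs_mul, abs_mul, abs_of_pos hlam₀, abs_of_nonneg (hnonneg i)]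
    calc lam i * |ζ k + ω k * lam i| ≤ lam i₁ * (δ * |ζ k + ω k * lam i₀|) :=
          mul_le_mul hi₁ (hbound k i hi) (abs_nonneg _) (hnonneg i₁)
      _ = _ := by field_simp
  -- `toEuc (A *ᵥ v)` is `toEuclideanLin A v` by definition, so `heig` and `hrec` apply as stated.
  have key := hT.abs_rayleigh_iterate_sub_le heig hrec (i₀ := i₀) (m := lam ⟨n - 1, by omega⟩)
    (fun i => hanti _ _ (Fin.zero_le i)) (fun i => hanti _ _ (Fin.le_def.2 (by simp; omega)))
    hx0norm hx0 (fun k => mul_ne_zero hlam₀.ne' (hnz k)) hρ k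
  have hc₀ : |⟪b i₀, x 0⟫| ≤ 1 := by
    simpa [hx0norm] using abs_real_inner_le_norm (b i₀) (x 0)
  have htan : (Real.sqrt (1 - |⟪b i₀, x 0⟫| ^ 2) / |⟪b i₀, x 0⟫|) ^ 2
      = (1 - ⟪b i₀, x 0⟫ ^ 2) / ⟪b i₀, x 0⟫ ^ 2 := by
    rw [div_pow, Real.sq_sqrt (by nlinarith [abs_nonneg ⟪b i₀, x 0⟫]), sq_abs]
  rw [htan, mul_assoc _ ((lam i₁ / lam i₀) ^ _), ← mul_pow, div_mul_eq_mul_div]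
  convert key using 4
  rw [EuclideanSpace.inner_eq_star_dotProduct, star_trivial, dotProduct_comm]
  rfl
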